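/- Energy estimate with arbitrary weight ω: Let (a, μ) ∈ AM(ℝ) (with respect to some nonzero nonnegative periodic Borel measure ρ with ‖ρ‖_unif < ∞), let (u, v) be a solution of H_{a,μ} u = 0, and let ω > 0. Then for all t > 0: ω²·u(t)² + v(t)² ≤ ( ω²·u(0)² + v(0)² ) · exp( ω·‖1/a‖_∞·t + (1/ω)·|μ|((0,t]) ); in particular ω²·u(t)² + v(t)² ≤ ( ω²·u(0)² + v(0)² ) · exp( ω·‖1/a‖_∞·t + (1/ω)·‖μ‖_unif·(t+1) ). -/

import Mathlib

open MeasureTheory Set Filter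

noncomputable section

/-- A nonnegative Borel measure on `ℝ` is finite on bounded sets. -/
def FiniteOnBounded (ν : MeasureTheory.Measure ℝ) : Prop :=
  ∀ s : Set ℝ, Bornology.IsBounded s → ν s < ⊤

/-- `⨆ t, ν ((t, t+1])` in `ℝ≥0∞`. -/
def unifE (ν : MeasureTheory.Measure ℝ) : ENNReal := ⨆ t : ℝ, ν (Set.Ioc t (t + 1))

/-- The uniform norm `‖ν‖_unif` as a real number. -/
def unifNorm (ν : MeasureTheory.Measure ℝ) : ℝ := (unifE ν).toReal

/-- Signed value of the real local measure `μ = (μp, μm)` on a set `B`. -/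
def lmVal (μp μm : MeasureTheory.Measure ℝ) (B : Set ℝ) : ℝ := (μp B).toReal - (μm B).toReal

/-- Signed integral `∫ f dμ` w.r.t. the real local measure `μ = (μp, μm)`. -/
def lmInt (μp μm : MeasureTheory.Measure ℝ) (f : ℝ → ℝ) : ℝ := (∫ x, f x ∂μp) - (∫ x, f x ∂μm)

/-- The (topological) support of a measure on `ℝ`. -/
def measSupport (ρ : MeasureTheory.Measure ℝ) : Set ℝ :=
  {x : ℝ | ∀ ε : ℝ, 0 < ε → 0 < ρ (Set.Ioo (x - ε) (x + ε))}

/-- `p` is a period of `ρ`, i.e. `p ≠ 0` and `ρ (B + p) = ρ B` for all `B`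
(note `B + p = (· - p) ⁻¹' B`). -/
def IsPeriod (ρ : MeasureTheory.Measure ℝ) (p : ℝ) : Prop :=
  p ≠ 0 ∧ ∀ B : Set ℝ, ρ ((fun x => x - p) ⁻¹' B) = ρ B

/-- Supremum norm of a (bounded) function. -/
def supNorm (a : ℝ → ℝ) : ℝ := sSup (Set.range a)

/-- The class `AM(ℝ)`: `a` Borel measurable with `0 < inf a` and `sup a < ∞`, and
`μ = (μp, μm)` a real local measure with `‖μ‖_unif < ∞` and `|μ|(ℝ ∖ supp ρ) = 0`. -/
structure AM (ρ : MeasureTheory.Measure ℝ) (a : ℝ → ℝ)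
    (μp μm : MeasureTheory.Measure ℝ) : Prop where
  meas_a : Measurable a
  inf_pos : 0 < ⨅ x : ℝ, a x
  bddAbove : BddAbove (Set.range a)
  finp : FiniteOnBounded μp
  finm : FiniteOnBounded μm
  unif_lt_top : unifE (μp + μm) < ⊤
  supp_sub : (μp + μm) ((measSupport ρ)ᶜ) = 0

/-- `(u, v)` is a solution of `H_{a,μ} u = z u` with weight `ρ`
(`v` playing the role of `a·u'`). -/
structure IsSolution (a : ℝ → ℝ) (μp μm ρ : MeasureTheory.Measure ℝ) (z : ℝ)
    (u v : ℝ → ℝ) : Prop where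
  meas_u : Measurable u
  meas_v : Measurable v
  eq_u : ∀ t : ℝ, u t = u 0 + ∫ s in (0:ℝ)..t, v s / a s
  eq_v : ∀ s t : ℝ, s ≤ t →
    v t - v s = ((∫ x in Set.Ioc s t, u x ∂μp) - (∫ x in Set.Ioc s t, u x ∂μm))
      - z * ∫ x in Set.Ioc s t, u x ∂ρ

/-- `(u, v)` is a solution of `H_{a,μ} u = 0`. -/
structure IsSolution0 (a : ℝ → ℝ) (μp μm : MeasureTheory.Measure ℝ)
    (u v : ℝ → ℝ) : Prop where
  meas_u : Measurable u
  meas_v : Measurable v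
  eq_u : ∀ t : ℝ, u t = u 0 + ∫ s in (0:ℝ)..t, v s / a s
  eq_v : ∀ s t : ℝ, s ≤ t →
    v t - v s = (∫ x in Set.Ioc s t, u x ∂μp) - (∫ x in Set.Ioc s t, u x ∂μm)

/-- Wasserstein-type seminorm `‖μ − ν‖_I` of the difference of two real local measures. -/
def wNorm (μp μm νp νm : MeasureTheory.Measure ℝ) (I : Set ℝ) : ℝ :=
  sSup {r : ℝ | ∃ w : ℝ → ℝ, LipschitzWith 1 w ∧ HasCompactSupport w ∧
    tsupport w ⊆ I ∧ Metric.diam (tsupport w) ≤ 2 ∧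
    r = |lmInt μp μm w - lmInt νp νm w|}

/-- Translate of a measure: `(lmTranslate ν p) B = ν (B + p)`. -/
def lmTranslate (ν : MeasureTheory.Measure ℝ) (p : ℝ) : MeasureTheory.Measure ℝ :=
  MeasureTheory.Measure.map (fun x => x - p) ν

/-- The primitive `φ_μ` of a real local measure `μ = (μp, μm)`. -/
def phiLM (μp μm : MeasureTheory.Measure ℝ) (t : ℝ) : ℝ :=
  if 0 ≤ t then lmVal μp μm (Set.Ioc 0 t) else -(lmVal μp μm (Set.Ioc t 0))

/-!
Formally, `E = ω² u² + v²` satisfies `dE = 2 ω² u v / a dt + 2 u v dμ`, and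
`2 ω² |u v| / a ≤ ω ‖1/a‖_∞ E`, `2 |u v| ≤ E / ω`, so Grönwall's inequality gives the estimate.

To make this rigorous, cut `[0, t]` into short steps `(p, q]` whose cost
`ν₁ + ν₂ = ω ‖1/a‖_∞ (q - p) + |μ|((p, q)) / ω` is at most `δ`. On such a step the maximum `U` of
`ω |u|` and the left limit `v (q-)` obey coupled linear bounds, giving
`E(q-) ≤ E(p) (1 + (1 + 17 δ) (ν₁ + ν₂))`; an atom `m = μ {q}` shears `v` by `m u(q)`, which
multiplies `E` by at most `exp (|m| / ω)`. Every point has short steps into and out of it, so a real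
induction along `[0, t]` gives `E(t) ≤ E(0) exp ((1 + 17 δ) Φ(t))` with
`Φ(t) = ω ‖1/a‖_∞ t + |μ|((0, t]) / ω`, and we let `δ → 0`. The same bootstrap shows that `v / a` is
integrable on `[0, t]`, so that `u` really is its primitive there.
-/

open Topology Real

lemma Real.mul_exp_half_le_exp_sub_one {s : ℝ} (hs : 0 ≤ s) : s * exp (s / 2) ≤ exp s - 1 := by
  have h : s / 2 ≤ sinh (s / 2) := Real.self_le_sinh_iff.mpr (by linarith)
  have e1 : exp (s / 2) * exp (s / 2) = exp s := by rw [← exp_add]; ring_nf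
  have e2 : exp (-(s / 2)) * exp (s / 2) = 1 := by rw [← exp_add]; simp
  rw [sinh_eq] at h
  nlinarith [exp_pos (s / 2)]

-- The shear `(x, w) ↦ (x, w + r x)` has squared norm `exp (2 arsinh (|r| / 2)) ≤ exp |r|`.
lemma sq_add_sq_add_mul_le_mul_exp {x w r s : ℝ} (hrs : |r| ≤ s) :
    x ^ 2 + (w + x * r) ^ 2 ≤ (x ^ 2 + w ^ 2) * exp s := by
  have hs : 0 ≤ s := (abs_nonneg r).trans hrs
  set q := exp s - 1
  have hq : s ^ 2 * (1 + q) ≤ q ^ 2 := by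
    have h := Real.mul_exp_half_le_exp_sub_one hs
    have e : exp (s / 2) ^ 2 = exp s := by rw [← exp_nat_mul]; ring_nf
    calc s ^ 2 * (1 + q) = (s * exp (s / 2)) ^ 2 := by rw [mul_pow, e]; ring
      _ ≤ q ^ 2 := pow_le_pow_left₀ (by positivity) h 2
  have hcross : 2 * (w * (x * r)) ≤ 2 * (|w| * |x|) * s := by
    have := le_abs_self (w * (x * r))
    rw [abs_mul, abs_mul] at this
    nlinarith [mul_nonneg (abs_nonneg w) (abs_nonneg x)]
  have hsq : (x * r) ^ 2 ≤ x ^ 2 * s ^ 2 := by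
    rw [mul_pow, ← sq_abs r]; gcongr
  -- `q` times the defect is `(q|w| - s|x|)² + (q² - s²(1+q)) x²`
  have hform : 2 * (|w| * |x|) * s + x ^ 2 * s ^ 2 ≤ (x ^ 2 + w ^ 2) * q := by
    rcases (show 0 ≤ q by linarith [add_one_le_exp s]).eq_or_lt with h0 | hpos
    · have : s = 0 := by nlinarith
      simp [this, ← h0]
    · refine le_of_mul_le_mul_left ?_ hpos
      nlinarith [sq_nonneg (q * |w| - s * |x|), sq_abs x, sq_abs w,
        mul_le_mul_of_nonneg_right hq (sq_nonneg x)]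
  have : exp s = 1 + q := by ring
  rw [this]; nlinarith

lemma sq_add_sq_le_of_coupled_bounds {A B U x y ν₁ ν₂ : ℝ} (hA : 0 ≤ A) (hB : 0 ≤ B)
    (hν₁ : 0 ≤ ν₁) (hν₂ : 0 ≤ ν₂) (hν : ν₁ + ν₂ ≤ 1 / 2)
    (hU : U ≤ A + ν₁ * (B + ν₂ * U)) (hx : |x| ≤ U) (hy : |y| ≤ B + ν₂ * U) :
    x ^ 2 + y ^ 2 ≤ (A ^ 2 + B ^ 2) * (1 + (1 + 17 * (ν₁ + ν₂)) * (ν₁ + ν₂)) := by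
  set V := B + ν₂ * U
  set ν := ν₁ + ν₂
  have hU0 : 0 ≤ U := (abs_nonneg x).trans hx
  have hV0 : 0 ≤ V := by positivity
  have hUV : U + V ≤ 2 * (A + B) := by nlinarith
  have hx2 : x ^ 2 ≤ (A + ν₁ * V) ^ 2 := by
    rw [← sq_abs]; exact pow_le_pow_left₀ (abs_nonneg x) (hx.trans hU) 2
  have hy2 : y ^ 2 ≤ (B + ν₂ * U) ^ 2 := by
    rw [← sq_abs]; exact pow_le_pow_left₀ (abs_nonneg y) hy 2
  have hAV : A * V ≤ A * B + ν * (A * U) := by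
    have : ν₂ * (A * U) ≤ ν * (A * U) := by gcongr; linarith
    linarith
  have hBU : B * U ≤ A * B + ν * (B * V) := by
    have : B * U ≤ B * (A + ν₁ * V) := by gcongr
    have : ν₁ * (B * V) ≤ ν * (B * V) := by gcongr; linarith
    linarith
  have hsq : ν₁ ^ 2 * V ^ 2 + ν₂ ^ 2 * U ^ 2 ≤ ν ^ 2 * (U ^ 2 + V ^ 2) := by
    nlinarith [mul_nonneg hν₁ hν₂, sq_nonneg U, sq_nonneg V]
  have hsmall : 2 * (A * U) + 2 * (B * V) + (U ^ 2 + V ^ 2) ≤ 17 * (A ^ 2 + B ^ 2) := by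
    nlinarith [sq_nonneg (A - U), sq_nonneg (B - V), sq_nonneg (A - B),
      pow_le_pow_left₀ (by positivity) hUV 2]
  have hcross : ν₁ * (A * V) + ν₂ * (B * U) ≤ ν * (A * B) + ν ^ 2 * (A * U + B * V) := by
    have h1 : ν₁ * (A * V) ≤ ν₁ * (A * B) + ν₁ * ν * (A * U) := by nlinarith
    have h2 : ν₂ * (B * U) ≤ ν₂ * (A * B) + ν₂ * ν * (B * V) := by nlinarith
    have h3 : ν₁ * ν * (A * U) ≤ ν ^ 2 * (A * U) := by
      rw [sq]; gcongr; linarith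
    have h4 : ν₂ * ν * (B * V) ≤ ν ^ 2 * (B * V) := by
      rw [sq]; gcongr; linarith
    linarith
  calc x ^ 2 + y ^ 2
      ≤ A ^ 2 + B ^ 2 + 2 * (ν₁ * (A * V) + ν₂ * (B * U)) + (ν₁ ^ 2 * V ^ 2 + ν₂ ^ 2 * U ^ 2) := by
        nlinarith
    _ ≤ A ^ 2 + B ^ 2 + 2 * ν * (A * B) +
          ν ^ 2 * (2 * (A * U) + 2 * (B * V) + (U ^ 2 + V ^ 2)) := by
        nlinarith
    _ ≤ (A ^ 2 + B ^ 2) * (1 + (1 + 17 * ν) * ν) := by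
        nlinarith [mul_le_mul_of_nonneg_left hsmall (sq_nonneg ν), sq_nonneg (A - B),
          mul_nonneg (by positivity : 0 ≤ ν) (sq_nonneg (A - B))]

lemma Real.forall_ge_of_local_steps {P : ℝ → Prop} {a : ℝ} (ha : P a)
    (hstep : ∀ x ≥ a, ∃ d > 0,
      (∀ y ∈ Ico a x, x - d < y → P y → P x) ∧ (P x → ∀ y ∈ Ioo x (x + d), P y)) :
    ∀ x ≥ a, P x := by
  by_contra! hbad
  set B := {x | a ≤ x ∧ ¬P x}
  have hBne : B.Nonempty := hbad
  have hBbdd : BddBelow B := ⟨a, fun _ hx => hx.1⟩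
  set T := sInf B
  have haT : a ≤ T := le_csInf hBne fun _ hx => hx.1
  have hbelow : ∀ y ∈ Ico a T, P y := fun y hy => by
    by_contra hy'
    exact (csInf_le hBbdd ⟨hy.1, hy'⟩).not_gt hy.2
  obtain ⟨d, hd, hleft, hright⟩ := hstep T haT
  have hT : P T := by
    rcases haT.eq_or_lt with h | h
    · exact h ▸ ha
    · have hy : max a (T - d / 2) ∈ Ico a T := ⟨le_max_left _ _, max_lt h (by linarith)⟩
      exact hleft _ hy (lt_max_of_lt_right (by linarith)) (hbelow _ hy)
  have hgap : ∀ b ∈ B, T + d ≤ b := fun b hb => by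
    by_contra! hlt
    rcases (csInf_le hBbdd hb).eq_or_lt with h | h
    · exact hb.2 (h ▸ hT)
    · exact hb.2 (hright hT b ⟨h, hlt⟩)
  linarith [le_csInf hBne hgap]

lemma abs_setIntegral_sub_setIntegral_le {α : Type*} [MeasurableSpace α] {μ₁ μ₂ : Measure α}
    {f : α → ℝ} {s : Set α} {C : ℝ} (hs : (μ₁ + μ₂) s < ⊤) (hC : ∀ x ∈ s, |f x| ≤ C) :
    |∫ x in s, f x ∂μ₁ - ∫ x in s, f x ∂μ₂| ≤ C * (μ₁ + μ₂).real s := by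
  rw [Measure.add_apply, ENNReal.add_lt_top] at hs
  have h₁ := norm_setIntegral_le_of_norm_le_const hs.1 (f := f) hC
  have h₂ := norm_setIntegral_le_of_norm_le_const hs.2 (f := f) hC
  rw [measureReal_add_apply hs.1.ne hs.2.ne]
  simp only [Real.norm_eq_abs] at h₁ h₂
  linarith [abs_sub (∫ x in s, f x ∂μ₁) (∫ x in s, f x ∂μ₂)]

lemma setIntegral_Ioc_eq_setIntegral_Ioo_add {μ : Measure ℝ} {f : ℝ → ℝ} {p q : ℝ} (hpq : p < q)
    (hf : IntegrableOn f (Ioo p q) μ) (hq : μ {q} < ⊤) :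
    ∫ x in Ioc p q, f x ∂μ = ∫ x in Ioo p q, f x ∂μ + μ.real {q} * f q := by
  rw [← Ioo_union_right hpq, setIntegral_union (by simp) (measurableSet_singleton q) hf
    (integrableOn_singleton (hx := hq)), integral_singleton, smul_eq_mul]

lemma FiniteOnBounded.add {μ₁ μ₂ : Measure ℝ} (h₁ : FiniteOnBounded μ₁)
    (h₂ : FiniteOnBounded μ₂) : FiniteOnBounded (μ₁ + μ₂) := fun s hs => by
  rw [Measure.add_apply]; exact ENNReal.add_lt_top.mpr ⟨h₁ s hs, h₂ s hs⟩

lemma FiniteOnBounded.tendsto_measure_Ioo_right {ν : Measure ℝ} (hν : FiniteOnBounded ν) (x : ℝ) :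
    Tendsto (fun d => ν (Ioo x (x + d))) (𝓝[>] 0) (𝓝 0) := by
  have h := tendsto_measure_biInter_gt (μ := ν) (s := fun d => Ioo x (x + d)) (a := 0)
    (fun _ _ => measurableSet_Ioo.nullMeasurableSet)
    (fun _ _ _ hij => Ioo_subset_Ioo_right (by linarith))
    ⟨1, one_pos, (hν _ (Metric.isBounded_Ioo _ _)).ne⟩
  have hempty : ⋂ d > (0 : ℝ), Ioo x (x + d) = ∅ :=
    eq_empty_of_forall_notMem fun y hy => by
      have h1 := (mem_iInter₂.mp hy 1 one_pos).1
      have h2 := (mem_iInter₂.mp hy (y - x) (by linarith)).2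
      linarith
  rwa [hempty, measure_empty] at h

lemma FiniteOnBounded.tendsto_measure_Ioo_left {ν : Measure ℝ} (hν : FiniteOnBounded ν) (x : ℝ) :
    Tendsto (fun d => ν (Ioo (x - d) x)) (𝓝[>] 0) (𝓝 0) := by
  have h := tendsto_measure_biInter_gt (μ := ν) (s := fun d => Ioo (x - d) x) (a := 0)
    (fun _ _ => measurableSet_Ioo.nullMeasurableSet)
    (fun _ _ _ hij => Ioo_subset_Ioo_left (by linarith))
    ⟨1, one_pos, (hν _ (Metric.isBounded_Ioo _ _)).ne⟩
  have hempty : ⋂ d > (0 : ℝ), Ioo (x - d) x = ∅ :=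
    eq_empty_of_forall_notMem fun y hy => by
      have h1 := (mem_iInter₂.mp hy 1 one_pos).2
      have h2 := (mem_iInter₂.mp hy (x - y) (by linarith)).1
      linarith
  rwa [hempty, measure_empty] at h

lemma FiniteOnBounded.exists_pos_forall_cost_le {ν : Measure ℝ} (hν : FiniteOnBounded ν)
    {c ω δ : ℝ} (hc : 0 ≤ c) (hω : 0 < ω) (hδ : 0 < δ) (x : ℝ) : ∃ d > 0,
      (∀ p ∈ Ioo (x - d) x, c * (x - p) + ν.real (Ioo p x) / ω ≤ δ) ∧
      (∀ q ∈ Ioo x (x + d), c * (q - x) + ν.real (Ioo x q) / ω ≤ δ) := by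
  have hlim : ∀ s : ℝ → Set ℝ, Tendsto (fun d => ν (s d)) (𝓝[>] 0) (𝓝 0) →
      ∀ᶠ d in 𝓝[>] 0, c * d + ν.real (s d) / ω < δ := fun s hs => by
    have : Tendsto (fun d => c * d + ν.real (s d) / ω) (𝓝[>] 0)
        (𝓝 (c * 0 + (0 : ENNReal).toReal / ω)) :=
      ((tendsto_const_nhds.mul tendsto_id).mono_left nhdsWithin_le_nhds).add
        (((ENNReal.tendsto_toReal ENNReal.zero_ne_top).comp hs).div_const ω)
    exact this.eventually_lt_const (by simpa using hδ)
  obtain ⟨d, ⟨hl, hr⟩, hd⟩ := ((hlim _ (hν.tendsto_measure_Ioo_left x)).and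
    (hlim _ (hν.tendsto_measure_Ioo_right x))).and self_mem_nhdsWithin |>.exists
  refine ⟨d, hd, fun p hp => ?_, fun q hq => ?_⟩
  · have : ν.real (Ioo p x) ≤ ν.real (Ioo (x - d) x) :=
      measureReal_mono (Ioo_subset_Ioo_left hp.1.le) (hν _ (Metric.isBounded_Ioo _ _)).ne
    have : c * (x - p) ≤ c * d := by gcongr; linarith [hp.1]
    have : ν.real (Ioo p x) / ω ≤ ν.real (Ioo (x - d) x) / ω := by gcongr
    linarith
  · have : ν.real (Ioo x q) ≤ ν.real (Ioo x (x + d)) :=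
      measureReal_mono (Ioo_subset_Ioo_right hq.2.le) (hν _ (Metric.isBounded_Ioo _ _)).ne
    have : c * (q - x) ≤ c * d := by gcongr; linarith [hq.2]
    have : ν.real (Ioo x q) / ω ≤ ν.real (Ioo x (x + d)) / ω := by gcongr
    linarith

lemma measure_Ioc_add_nat_le (ν : Measure ℝ) (x : ℝ) (n : ℕ) :
    ν (Ioc x (x + n)) ≤ n * unifE ν := by
  induction n with
  | zero => simp
  | succ n ih =>
    calc ν (Ioc x (x + ↑(n + 1))) = ν (Ioc x (x + n) ∪ Ioc (x + n) (x + n + 1)) := by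
          rw [Ioc_union_Ioc_eq_Ioc (by simp) (by simp), Nat.cast_succ, add_assoc]
      _ ≤ ν (Ioc x (x + n)) + ν (Ioc (x + n) (x + n + 1)) := measure_union_le _ _
      _ ≤ n * unifE ν + unifE ν := add_le_add ih (le_iSup (fun s => ν (Ioc s (s + 1))) _)
      _ = ↑(n + 1) * unifE ν := by push_cast; ring

lemma toReal_measure_Ioc_le_unifNorm_mul {ν : Measure ℝ} (hν : unifE ν < ⊤) {t : ℝ} (ht : 0 ≤ t) :
    (ν (Ioc 0 t)).toReal ≤ unifNorm ν * (t + 1) := by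
  have h : ν (Ioc 0 t) ≤ ⌈t⌉₊ * unifE ν :=
    (measure_mono (Ioc_subset_Ioc_right (by simpa using Nat.le_ceil t))).trans
      (by simpa using measure_Ioc_add_nat_le ν 0 ⌈t⌉₊)
  calc (ν (Ioc 0 t)).toReal ≤ ⌈t⌉₊ * unifNorm ν := by
        simpa [unifNorm] using ENNReal.toReal_mono (by finiteness) h
    _ ≤ (t + 1) * unifNorm ν := by
        gcongr; exact ENNReal.toReal_nonneg; exact (Nat.ceil_lt_add_one ht).le
    _ = unifNorm ν * (t + 1) := mul_comm _ _

lemma abs_div_le_mul_of_one_div_le {x y K D : ℝ} (hy : 0 < y) (hK : 1 / y ≤ K) (hx : |x| ≤ D) :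
    |x / y| ≤ K * D := by
  rw [abs_div, abs_of_pos hy, div_eq_mul_one_div, mul_comm]
  exact mul_le_mul hK hx (abs_nonneg x) ((one_div_pos.2 hy).le.trans hK)

section Solution

variable {a u v : ℝ → ℝ} {μp μm : Measure ℝ} {K ω : ℝ}

lemma abs_intervalIntegral_div_le (ha_pos : ∀ x, 0 < a x) (haK : ∀ x, 1 / a x ≤ K)
    {p τ D : ℝ} (hpτ : p ≤ τ) (hD : ∀ x ∈ Ioo p τ, |v x| ≤ D) :
    |∫ s in p..τ, v s / a s| ≤ K * D * (τ - p) := by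
  have h := intervalIntegral.norm_integral_le_of_norm_le_const_ae (a := p) (b := τ)
    (C := K * D) (f := fun s => v s / a s) <| by
      filter_upwards [Measure.ae_ne volume τ] with x hxτ hx
      rw [uIoc_of_le hpτ] at hx
      exact abs_div_le_mul_of_one_div_le (ha_pos x) (haK x) (hD x ⟨hx.1, lt_of_le_of_ne hx.2 hxτ⟩)
  rwa [abs_of_nonneg (sub_nonneg.2 hpτ)] at h

namespace IsSolution0

lemma continuousOn (hsol : IsSolution0 a μp μm u v) {r : ℝ}
    (hr : IntervalIntegrable (fun s => v s / a s) volume 0 r) : ContinuousOn u (uIcc 0 r) :=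
  (continuousOn_const.add
    (intervalIntegral.continuousOn_primitive_interval' hr left_mem_uIcc)).congr fun τ _ =>
      hsol.eq_u τ

lemma sub_eq_integral (hsol : IsSolution0 a μp μm u v) {p τ : ℝ}
    (hp : IntervalIntegrable (fun s => v s / a s) volume 0 p)
    (hτ : IntervalIntegrable (fun s => v s / a s) volume 0 τ) :
    u τ - u p = ∫ s in p..τ, v s / a s := by
  rw [hsol.eq_u τ, hsol.eq_u p, ← intervalIntegral.integral_interval_sub_left hτ hp]
  ring

lemma abs_v_sub_le (hsol : IsSolution0 a μp μm u v) (hν : FiniteOnBounded (μp + μm)) {s t C : ℝ}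
    (hst : s ≤ t) (hC : ∀ x ∈ Ioc s t, |u x| ≤ C) :
    |v t - v s| ≤ C * (μp + μm).real (Ioc s t) := by
  rw [hsol.eq_v s t hst]
  exact abs_setIntegral_sub_setIntegral_le (hν _ (Metric.isBounded_Ioc s t)) hC


lemma exists_bound_Icc (hsol : IsSolution0 a μp μm u v) (ha_pos : ∀ x, 0 < a x)
    (haK : ∀ x, 1 / a x ≤ K) (hν : FiniteOnBounded (μp + μm)) (hω : 0 < ω) {p q r : ℝ}
    (hp : 0 ≤ p) (hpr : p ≤ r) (hrq : r ≤ q)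
    (hr : IntervalIntegrable (fun s => v s / a s) volume 0 r) :
    ∃ U, (∀ τ ∈ Icc p r, ω * |u τ| ≤ U) ∧
      U ≤ ω * |u p| + ω * K * (q - p) * (|v p| + (μp + μm).real (Ioo p q) / ω * U) := by
  have hK : 0 ≤ K := (one_div_pos.2 (ha_pos 0)).le.trans (haK 0)
  have hint : ∀ τ ∈ Icc p r, IntervalIntegrable (fun s => v s / a s) volume 0 τ := fun τ hτ =>
    hr.mono_set <| uIcc_subset_uIcc_left <| by
      rw [uIcc_of_le (hp.trans hpr)]; exact ⟨hp.trans hτ.1, hτ.2⟩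
  have hcont : ContinuousOn (fun τ => ω * |u τ|) (Icc p r) :=
    continuousOn_const.mul ((hsol.continuousOn hr).mono (by
      rw [uIcc_of_le (hp.trans hpr)]; exact Icc_subset_Icc_left hp)).abs
  obtain ⟨τ₀, hτ₀, hmax⟩ := isCompact_Icc.exists_isMaxOn (nonempty_Icc.2 hpr) hcont
  set U := ω * |u τ₀|
  refine ⟨U, fun τ hτ => hmax hτ, ?_⟩
  set ν₂ := (μp + μm).real (Ioo p q) / ω
  have hv : ∀ y ∈ Ioo p τ₀, |v y| ≤ |v p| + ν₂ * U := fun y hy => by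
    have hbound : ∀ x ∈ Ioc p y, |u x| ≤ |u τ₀| := fun x hx =>
      le_of_mul_le_mul_left (hmax ⟨hx.1.le, hx.2.trans (hy.2.le.trans hτ₀.2)⟩) hω
    have hmono : (μp + μm).real (Ioc p y) ≤ (μp + μm).real (Ioo p q) :=
      measureReal_mono (Ioc_subset_Ioo_right (hy.2.trans_le (hτ₀.2.trans hrq)))
        (hν _ (Metric.isBounded_Ioo p q)).ne
    have hν₂U : ν₂ * U = |u τ₀| * (μp + μm).real (Ioo p q) := by
      simp only [ν₂, U]; field_simp
    have := hsol.abs_v_sub_le hν hy.1.le hbound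
    have := abs_sub_abs_le_abs_sub (v y) (v p)
    nlinarith [abs_nonneg (u τ₀)]
  have hu : |u τ₀ - u p| ≤ K * (|v p| + ν₂ * U) * (τ₀ - p) := by
    rw [hsol.sub_eq_integral (hint p ⟨le_rfl, hpr⟩) (hint τ₀ hτ₀)]
    exact abs_intervalIntegral_div_le ha_pos haK hτ₀.1 hv
  have hD : 0 ≤ |v p| + ν₂ * U := by positivity
  calc ω * |u τ₀| ≤ ω * |u p| + ω * |u τ₀ - u p| := by
        rw [← mul_add]; gcongr; linarith [abs_sub_abs_le_abs_sub (u τ₀) (u p)]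
    _ ≤ ω * |u p| + ω * (K * (|v p| + ν₂ * U) * (q - p)) := by
        gcongr; exact hu.trans (by gcongr; linarith [hτ₀.2])
    _ = ω * |u p| + ω * K * (q - p) * (|v p| + ν₂ * U) := by ring

lemma intervalIntegrable_of_step (hsol : IsSolution0 a μp μm u v) (ha : Measurable a)
    (ha_pos : ∀ x, 0 < a x) (haK : ∀ x, 1 / a x ≤ K) (hν : FiniteOnBounded (μp + μm))
    (hω : 0 < ω) {p q : ℝ} (hp : 0 ≤ p) (hpq : p < q)
    (hsmall : ω * K * (q - p) + (μp + μm).real (Ioo p q) / ω ≤ 1 / 2)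
    (hint : IntervalIntegrable (fun s => v s / a s) volume 0 p) :
    IntervalIntegrable (fun s => v s / a s) volume 0 q := by
  have hK : 0 ≤ K := (one_div_pos.2 (ha_pos 0)).le.trans (haK 0)
  have hν₁ : 0 ≤ ω * K * (q - p) := by have := hpq.le; positivity
  have hν₂ : 0 ≤ (μp + μm).real (Ioo p q) / ω := by positivity
  set C := max (2 * (ω * |u p| + |v p|) / ω) |u 0|
  -- Where `v / a` is not yet known to be integrable, the Bochner integral is `0` and `u = u 0`.
  have hu : ∀ τ ∈ Icc p q, |u τ| ≤ C := fun τ hτ => by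
    by_cases hτint : IntervalIntegrable (fun s => v s / a s) volume 0 τ
    · obtain ⟨U, hU, hUle⟩ := hsol.exists_bound_Icc ha_pos haK hν hω hp hτ.1 hτ.2 hτint
      have hUτ := hU τ ⟨hτ.1, le_rfl⟩
      have hU0 : 0 ≤ U := (by positivity : 0 ≤ ω * |u τ|).trans hUτ
      have h1 : ω * K * (q - p) * |v p| ≤ |v p| / 2 := by
        nlinarith [abs_nonneg (v p)]
      have h2 : ω * K * (q - p) * ((μp + μm).real (Ioo p q) / ω * U) ≤ U / 4 := by
        nlinarith [mul_nonneg hν₁ hU0, mul_nonneg hν₂ hU0]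
      have : U ≤ 2 * (ω * |u p| + |v p|) := by
        nlinarith [abs_nonneg (v p), abs_nonneg (u p)]
      exact le_max_of_le_left ((le_div_iff₀' hω).2 (by linarith))
    · rw [hsol.eq_u τ, intervalIntegral.integral_undef hτint, add_zero]
      exact le_max_right _ _
  have hv : ∀ y ∈ Ioo p q, |v y| ≤ |v p| + C * (μp + μm).real (Ioo p q) := fun y hy => by
    have h := hsol.abs_v_sub_le hν hy.1.le fun x hx => hu x ⟨hx.1.le, hx.2.trans hy.2.le⟩
    have hmono : (μp + μm).real (Ioc p y) ≤ (μp + μm).real (Ioo p q) :=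
      measureReal_mono (Ioc_subset_Ioo_right hy.2) (hν _ (Metric.isBounded_Ioo p q)).ne
    have hC : 0 ≤ C := (abs_nonneg _).trans (hu p ⟨le_rfl, hpq.le⟩)
    nlinarith [abs_sub_abs_le_abs_sub (v y) (v p)]
  have hIoo : IntegrableOn (fun s => v s / a s) (Ioo p q) :=
    Measure.integrableOn_of_bounded (by simp [Real.volume_Ioo])
      (hsol.meas_v.div ha).aestronglyMeasurable <| (ae_restrict_iff' measurableSet_Ioo).2 <|
        Eventually.of_forall fun y hy => abs_div_le_mul_of_one_div_le (ha_pos y) (haK y) (hv y hy)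
  exact hint.trans ((intervalIntegrable_iff_integrableOn_Ioo_of_le hpq.le).2 hIoo)

/-- `y` is the left limit `v (q-)` and `m = μ {q}` the atom at `q`. -/
lemma exists_eq_add_jump (hsol : IsSolution0 a μp μm u v) (hν : FiniteOnBounded (μp + μm))
    {p q C : ℝ} (hpq : p < q) (hC : ∀ x ∈ Ioo p q, |u x| ≤ C) :
    ∃ y m, |y - v p| ≤ C * (μp + μm).real (Ioo p q) ∧ |m| ≤ (μp + μm).real {q} ∧
      v q = y + m * u q := by
  have hfin : (μp + μm) (Ioo p q) < ⊤ := hν _ (Metric.isBounded_Ioo p q)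
  have hfin_q : (μp + μm) {q} < ⊤ := hν _ Bornology.isBounded_singleton
  have hsplit : ∀ μ ≤ μp + μm,
      ∫ x in Ioc p q, u x ∂μ = ∫ x in Ioo p q, u x ∂μ + μ.real {q} * u q :=
    fun μ hμ => setIntegral_Ioc_eq_setIntegral_Ioo_add hpq
      (Measure.integrableOn_of_bounded ((hμ _).trans_lt hfin).ne
        hsol.meas_u.aestronglyMeasurable <|
          (ae_restrict_iff' measurableSet_Ioo).2 <| Eventually.of_forall hC)
      ((hμ _).trans_lt hfin_q)
  refine ⟨v p + (∫ x in Ioo p q, u x ∂μp - ∫ x in Ioo p q, u x ∂μm),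
    μp.real {q} - μm.real {q}, ?_, ?_, ?_⟩
  · rw [add_sub_cancel_left]
    exact abs_setIntegral_sub_setIntegral_le hfin hC
  · rw [Measure.add_apply, ENNReal.add_lt_top] at hfin_q
    rw [measureReal_add_apply hfin_q.1.ne hfin_q.2.ne, abs_sub_le_iff]
    constructor <;> linarith [measureReal_nonneg (μ := μp) (s := {q}),
      measureReal_nonneg (μ := μm) (s := {q})]
  · have h := hsol.eq_v p q hpq.le
    rw [hsplit μp (Measure.le_add_right le_rfl), hsplit μm (Measure.le_add_left le_rfl)] at h
    linarith

lemma energy_step (hsol : IsSolution0 a μp μm u v) (ha_pos : ∀ x, 0 < a x)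
    (haK : ∀ x, 1 / a x ≤ K) (hν : FiniteOnBounded (μp + μm)) (hω : 0 < ω) {p q δ : ℝ}
    (hp : 0 ≤ p) (hpq : p < q) (hq : IntervalIntegrable (fun s => v s / a s) volume 0 q)
    (hsmall : ω * K * (q - p) + (μp + μm).real (Ioo p q) / ω ≤ δ) (hδ : δ ≤ 1 / 2) :
    ω ^ 2 * u q ^ 2 + v q ^ 2 ≤ (ω ^ 2 * u p ^ 2 + v p ^ 2) *
      exp ((1 + 17 * δ) * (ω * K * (q - p) + (μp + μm).real (Ioc p q) / ω)) := by
  have hK : 0 ≤ K := (one_div_pos.2 (ha_pos 0)).le.trans (haK 0)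
  set ν₁ := ω * K * (q - p)
  set ν₂ := (μp + μm).real (Ioo p q) / ω
  set s := (μp + μm).real {q} / ω
  have hν₁ : 0 ≤ ν₁ := by have := hpq.le; positivity
  have hν₂ : 0 ≤ ν₂ := by positivity
  have hs : 0 ≤ s := by positivity
  obtain ⟨U, hU, hUle⟩ := hsol.exists_bound_Icc ha_pos haK hν hω hp hpq.le le_rfl hq
  obtain ⟨y, m, hy, hm, hvq⟩ := hsol.exists_eq_add_jump hν hpq (C := U / ω) fun x hx =>
    (le_div_iff₀' hω).2 (hU x ⟨hx.1.le, hx.2.le⟩)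
  have hy' : |y| ≤ |v p| + ν₂ * U := by
    have : U / ω * (μp + μm).real (Ioo p q) = ν₂ * U := by simp only [ν₂]; ring
    linarith [abs_sub_abs_le_abs_sub y (v p)]
  have hcont := sq_add_sq_le_of_coupled_bounds (x := ω * u q) (by positivity) (abs_nonneg (v p))
    hν₁ hν₂ (by linarith) hUle (by rw [abs_mul, abs_of_pos hω]; exact hU q ⟨hpq.le, le_rfl⟩) hy'
  have hjump := sq_add_sq_add_mul_le_mul_exp (x := ω * u q) (w := y) (r := m / ω) (s := s) <| by
    rw [abs_div, abs_of_pos hω]; exact div_le_div_of_nonneg_right hm hω.le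
  have hIoc : (μp + μm).real (Ioc p q) / ω = ν₂ + s := by
    rw [← Ioo_union_right hpq, measureReal_union (by simp) (measurableSet_singleton q)
      (hν _ (Metric.isBounded_Ioo p q)).ne (hν _ Bornology.isBounded_singleton).ne, add_div]
  calc ω ^ 2 * u q ^ 2 + v q ^ 2
      = (ω * u q) ^ 2 + (y + ω * u q * (m / ω)) ^ 2 := by
        rw [hvq]; field_simp
    _ ≤ ((ω * u q) ^ 2 + y ^ 2) * exp s := hjump
    _ ≤ (ω ^ 2 * u p ^ 2 + v p ^ 2) * (1 + (1 + 17 * (ν₁ + ν₂)) * (ν₁ + ν₂)) * exp s := by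
        refine mul_le_mul_of_nonneg_right ?_ (exp_pos s).le
        simpa only [mul_pow, sq_abs] using hcont
    _ ≤ (ω ^ 2 * u p ^ 2 + v p ^ 2) * exp ((1 + 17 * δ) * (ν₁ + ν₂)) * exp s := by
        gcongr
        have : (1 + 17 * (ν₁ + ν₂)) * (ν₁ + ν₂) ≤ (1 + 17 * δ) * (ν₁ + ν₂) := by gcongr
        linarith [add_one_le_exp ((1 + 17 * δ) * (ν₁ + ν₂))]
    _ ≤ (ω ^ 2 * u p ^ 2 + v p ^ 2) * exp ((1 + 17 * δ) * (ν₁ + (μp + μm).real (Ioc p q) / ω)) := by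
        rw [mul_assoc, ← exp_add, hIoc]
        gcongr
        nlinarith [mul_nonneg (by linarith : 0 ≤ 17 * δ) hs]

lemma energy_le_of_delta (hsol : IsSolution0 a μp μm u v) (ha : Measurable a)
    (ha_pos : ∀ x, 0 < a x) (haK : ∀ x, 1 / a x ≤ K) (hν : FiniteOnBounded (μp + μm))
    (hω : 0 < ω) {δ t : ℝ} (hδ : 0 < δ) (hδ' : δ ≤ 1 / 2) (ht : 0 ≤ t) :
    ω ^ 2 * u t ^ 2 + v t ^ 2 ≤ (ω ^ 2 * u 0 ^ 2 + v 0 ^ 2) *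
      exp ((1 + 17 * δ) * (ω * K * t + (μp + μm).real (Ioc 0 t) / ω)) := by
  have hK : 0 ≤ K := (one_div_pos.2 (ha_pos 0)).le.trans (haK 0)
  set Φ := fun s => ω * K * s + (μp + μm).real (Ioc 0 s) / ω
  have hΦ : ∀ p q, 0 ≤ p → p ≤ q → Φ q = Φ p + (ω * K * (q - p) + (μp + μm).real (Ioc p q) / ω) :=
    fun p q hp hpq => by
      simp only [Φ]
      rw [← Ioc_union_Ioc_eq_Ioc hp hpq,
        measureReal_union (Ioc_disjoint_Ioc_of_le le_rfl) measurableSet_Ioc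
        (hν _ (Metric.isBounded_Ioc 0 p)).ne (hν _ (Metric.isBounded_Ioc p q)).ne]
      ring
  set P := fun s => IntervalIntegrable (fun s => v s / a s) volume 0 s ∧
    ω ^ 2 * u s ^ 2 + v s ^ 2 ≤ (ω ^ 2 * u 0 ^ 2 + v 0 ^ 2) * exp ((1 + 17 * δ) * Φ s)
  have hstep : ∀ p q, 0 ≤ p → p < q →
      ω * K * (q - p) + (μp + μm).real (Ioo p q) / ω ≤ δ → P p → P q :=
      fun p q hp hpq hsmall hPp => by
    have hq := hsol.intervalIntegrable_of_step ha ha_pos haK hν hω hp hpq (hsmall.trans hδ') hPp.1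
    refine ⟨hq, (hsol.energy_step ha_pos haK hν hω hp hpq hq hsmall hδ').trans ?_⟩
    calc _ ≤ (ω ^ 2 * u 0 ^ 2 + v 0 ^ 2) * exp ((1 + 17 * δ) * Φ p) *
          exp ((1 + 17 * δ) * (ω * K * (q - p) + (μp + μm).real (Ioc p q) / ω)) := by
          gcongr; exact hPp.2
      _ = _ := by rw [hΦ p q hp hpq.le, mul_add (1 + 17 * δ) (Φ p), exp_add, mul_assoc]
  refine (Real.forall_ge_of_local_steps (P := P) ⟨IntervalIntegrable.refl, by simp [Φ]⟩ ?_ t ht).2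
  intro x hx
  obtain ⟨d, hd, hleft, hright⟩ :=
    hν.exists_pos_forall_cost_le (mul_nonneg hω.le hK) hω hδ x
  exact ⟨d, hd, fun p hp hpd => hstep p x hp.1 hp.2 (hleft p ⟨hpd, hp.2⟩),
    fun hPx q hq => hstep x q hx hq.1 (hright q hq) hPx⟩

lemma energy_le (hsol : IsSolution0 a μp μm u v) (ha : Measurable a)
    (ha_pos : ∀ x, 0 < a x) (haK : ∀ x, 1 / a x ≤ K) (hν : FiniteOnBounded (μp + μm))
    (hω : 0 < ω) {t : ℝ} (ht : 0 ≤ t) :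
    ω ^ 2 * u t ^ 2 + v t ^ 2 ≤ (ω ^ 2 * u 0 ^ 2 + v 0 ^ 2) *
      exp (ω * K * t + 1 / ω * ((μp + μm) (Ioc 0 t)).toReal) := by
  set Φ := ω * K * t + 1 / ω * ((μp + μm) (Ioc 0 t)).toReal
  have hlim : Tendsto (fun δ => (ω ^ 2 * u 0 ^ 2 + v 0 ^ 2) * exp ((1 + 17 * δ) * Φ))
      (𝓝[>] 0) (𝓝 ((ω ^ 2 * u 0 ^ 2 + v 0 ^ 2) * exp Φ)) := by
    have : Continuous fun δ : ℝ => (ω ^ 2 * u 0 ^ 2 + v 0 ^ 2) * exp ((1 + 17 * δ) * Φ) := by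
      fun_prop
    simpa using this.continuousWithinAt.tendsto (x := 0) (s := Ioi 0)
  refine ge_of_tendsto hlim ?_
  filter_upwards [Ioc_mem_nhdsGT (show (0 : ℝ) < 1 / 2 by norm_num)] with δ hδ
  simpa only [Φ, one_div_mul_eq_div, measureReal_def] using
    hsol.energy_le_of_delta ha ha_pos haK hν hω hδ.1 hδ.2 ht

end IsSolution0

end Solution

namespace AM

variable {ρ : Measure ℝ} {a : ℝ → ℝ} {μp μm : Measure ℝ}

lemma bddBelow (hAM : AM ρ a μp μm) : BddBelow (range a) := by
  by_contra h
  exact hAM.inf_pos.ne' (Real.iInf_of_not_bddBelow h)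

lemma pos (hAM : AM ρ a μp μm) (x : ℝ) : 0 < a x :=
  hAM.inf_pos.trans_le (ciInf_le hAM.bddBelow x)

lemma one_div_le_supNorm (hAM : AM ρ a μp μm) (x : ℝ) :
    1 / a x ≤ supNorm (fun x => 1 / a x) := by
  refine le_csSup ⟨1 / ⨅ x, a x, ?_⟩ ⟨x, rfl⟩
  rintro _ ⟨y, rfl⟩
  exact one_div_le_one_div_of_le hAM.inf_pos (ciInf_le hAM.bddBelow y)

end AM

theorem energy_estimate_with_weight_general
    (ρ : MeasureTheory.Measure ℝ)
    (a : ℝ → ℝ) (μp μm : MeasureTheory.Measure ℝ) (hAM : AM ρ a μp μm)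
    (u v : ℝ → ℝ) (hsol : IsSolution0 a μp μm u v)
    (ω : ℝ) (hω : 0 < ω) :
    ∀ t : ℝ, 0 < t →
      (ω ^ 2 * u t ^ 2 + v t ^ 2 ≤ (ω ^ 2 * u 0 ^ 2 + v 0 ^ 2) *
        Real.exp (ω * supNorm (fun x => 1 / a x) * t +
          (1 / ω) * ((μp + μm) (Set.Ioc 0 t)).toReal)) ∧
      (ω ^ 2 * u t ^ 2 + v t ^ 2 ≤ (ω ^ 2 * u 0 ^ 2 + v 0 ^ 2) *
        Real.exp (ω * supNorm (fun x => 1 / a x) * t +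
          (1 / ω) * (unifNorm (μp + μm) * (t + 1)))) := by
  intro t ht
  have h := hsol.energy_le hAM.meas_a hAM.pos hAM.one_div_le_supNorm (hAM.finp.add hAM.finm) hω
    ht.le
  refine ⟨h, h.trans ?_⟩
  gcongr
  exact toReal_measure_Ioc_le_unifNorm_mul hAM.unif_lt_top ht.le

/-- Energy estimate with arbitrary weight `ω`. -/
theorem energy_estimate_with_weight
    (ρ : MeasureTheory.Measure ℝ) (hρ0 : ρ ≠ 0) (hρfin : unifE ρ < ⊤)
    (hρper : ∃ p : ℝ, IsPeriod ρ p)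
    (a : ℝ → ℝ) (μp μm : MeasureTheory.Measure ℝ) (hAM : AM ρ a μp μm)
    (u v : ℝ → ℝ) (hsol : IsSolution0 a μp μm u v)
    (ω : ℝ) (hω : 0 < ω) :
    ∀ t : ℝ, 0 < t →
      (ω ^ 2 * u t ^ 2 + v t ^ 2 ≤ (ω ^ 2 * u 0 ^ 2 + v 0 ^ 2) *
        Real.exp (ω * supNorm (fun x => 1 / a x) * t +
          (1 / ω) * ((μp + μm) (Set.Ioc 0 t)).toReal)) ∧
      (ω ^ 2 * u t ^ 2 + v t ^ 2 ≤ (ω ^ 2 * u 0 ^ 2 + v 0 ^ 2) *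
        Real.exp (ω * supNorm (fun x => 1 / a x) * t +
          (1 / ω) * (unifNorm (μp + μm) * (t + 1)))) :=
  energy_estimate_with_weight_general ρ a μp μm hAM u v hsol ω hω
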